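/- arXiv:1705.09519 — 4 statements merged into one kernel-verified Lean document; each statement's English description precedes it below -/
import Mathlib

section
/- Let N ≥ 1, let m, n be positive integers, k = m/n, and let c, c₀, C ∈ ℝ. Let L and G be smooth functions on the extended phase space ℝ^{2N+2} depending on (q,p) only, and suppose X_L(X_L(G)) = −2(cL + c₀)·G identically. Let γ be a smooth function on an open interval I ⊆ ℝ satisfying γ' + cγ² + C = 0. Define the sequence G_1 = G, G_{j+1} = X_L(G)·G_j + (1/j)·G·X_L(G_j) for j ≥ 1, the operator U(h) = p_u·h + (m/n²)·γ(u)·X_L(h) on smooth functions, the function K_{m,n} = U^m(G_n) (the m-th iterate of U applied to G_n), and the extended Hamiltonian H = (1/2)p_u² − k²γ'(u)·L + k²c₀·γ(u)². Then {H, K_{m,n}} = 0 at every point of the extended phase space with u ∈ I. -/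
/-!
Extended phase space ℝ^{2N+2} with coordinates (u, q, p_u, p),
canonical Poisson bracket (sign convention {q^i, p_i} = -1) and
Hamiltonian vector field X_L F = {L, F}.
-/

noncomputable section

/-- The extended phase space: a point is `(u, q, p_u, p)`. -/
abbrev PS (N : ℕ) : Type := ℝ × (Fin N → ℝ) × ℝ × (Fin N → ℝ)

/-- Partial derivative with respect to `u`. -/
def pdu {N : ℕ} (F : PS N → ℝ) (x : PS N) : ℝ :=
  deriv (fun t => F (t, x.2.1, x.2.2.1, x.2.2.2)) x.1

/-- Partial derivative with respect to `p_u`. -/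
def pdpu {N : ℕ} (F : PS N → ℝ) (x : PS N) : ℝ :=
  deriv (fun t => F (x.1, x.2.1, t, x.2.2.2)) x.2.2.1

/-- Partial derivative with respect to `q^i`. -/
def pdq {N : ℕ} (i : Fin N) (F : PS N → ℝ) (x : PS N) : ℝ :=
  deriv (fun t => F (x.1, Function.update x.2.1 i t, x.2.2.1, x.2.2.2)) (x.2.1 i)

/-- Partial derivative with respect to `p_i`. -/
def pdp {N : ℕ} (i : Fin N) (F : PS N → ℝ) (x : PS N) : ℝ :=
  deriv (fun t => F (x.1, x.2.1, x.2.2.1, Function.update x.2.2.2 i t)) (x.2.2.2 i)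

/-- The canonical Poisson bracket on the extended phase space, with the sign
convention `{q^i, p_i} = -1` of the paper. -/
def pbracket {N : ℕ} (F H : PS N → ℝ) (x : PS N) : ℝ :=
  (pdpu F x * pdu H x - pdu F x * pdpu H x)
    + ∑ i : Fin N, (pdp i F x * pdq i H x - pdq i F x * pdp i H x)

/-- The Hamiltonian vector field of `L` applied to `F`: `X_L F = {L, F}`. -/
def XL {N : ℕ} (L : PS N → ℝ) (F : PS N → ℝ) : PS N → ℝ :=
  fun x => pbracket L F x

namespace EHFI

variable {N : ℕ}

/-- q,p-only functions -/
def QP (F : PS N → ℝ) : Prop :=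
  ∀ (u u' pu pu' : ℝ) (q p : Fin N → ℝ), F (u, q, pu, p) = F (u', q, pu', p)

lemma hasDerivAt_update (q : Fin N → ℝ) (i : Fin N) (t₀ : ℝ) :
    HasDerivAt (fun t => Function.update q i t) (Pi.single i 1) t₀ := by
  rw [hasDerivAt_pi]
  intro j
  rcases eq_or_ne j i with h | h
  · subst h
    simp only [Function.update_self, Pi.single_eq_same]
    simpa using (hasDerivAt_id' t₀)
  · simp only [Function.update_of_ne h, Pi.single_eq_of_ne h]
    exact hasDerivAt_const _ _

def vu (N : ℕ) : PS N := (1, 0, 0, 0)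
def vpu (N : ℕ) : PS N := (0, 0, 1, 0)
def vq (i : Fin N) : PS N := (0, Pi.single i 1, 0, 0)
def vp (i : Fin N) : PS N := (0, 0, 0, Pi.single i 1)

lemma hasDerivAt_u {F : PS N → ℝ} {x : PS N} (hF : DifferentiableAt ℝ F x) :
    HasDerivAt (fun t => F (t, x.2.1, x.2.2.1, x.2.2.2)) (fderiv ℝ F x (vu N)) x.1 := by
  have hc : HasDerivAt (fun t => ((t, x.2.1, x.2.2.1, x.2.2.2) : PS N)) (vu N) x.1 :=
    (hasDerivAt_id _).prodMk ((hasDerivAt_const _ _).prodMk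
      ((hasDerivAt_const _ _).prodMk (hasDerivAt_const _ _)))
  exact hF.hasFDerivAt.comp_hasDerivAt _ hc

lemma hasDerivAt_pu {F : PS N → ℝ} {x : PS N} (hF : DifferentiableAt ℝ F x) :
    HasDerivAt (fun t => F (x.1, x.2.1, t, x.2.2.2)) (fderiv ℝ F x (vpu N)) x.2.2.1 := by
  have hc : HasDerivAt (fun t => ((x.1, x.2.1, t, x.2.2.2) : PS N)) (vpu N) x.2.2.1 :=
    (hasDerivAt_const _ _).prodMk ((hasDerivAt_const _ _).prodMk
      ((hasDerivAt_id _).prodMk (hasDerivAt_const _ _)))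
  exact hF.hasFDerivAt.comp_hasDerivAt _ hc

lemma hasDerivAt_q {F : PS N → ℝ} {x : PS N} (i : Fin N) (hF : DifferentiableAt ℝ F x) :
    HasDerivAt (fun t => F (x.1, Function.update x.2.1 i t, x.2.2.1, x.2.2.2))
      (fderiv ℝ F x (vq i)) (x.2.1 i) := by
  have hc : HasDerivAt (fun t => ((x.1, Function.update x.2.1 i t, x.2.2.1, x.2.2.2) : PS N))
      (vq i) (x.2.1 i) :=
    (hasDerivAt_const _ _).prodMk ((hasDerivAt_update _ i _).prodMk
      ((hasDerivAt_const _ _).prodMk (hasDerivAt_const _ _)))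
  have h2 : HasFDerivAt F (fderiv ℝ F x)
      ((x.1, Function.update x.2.1 i (x.2.1 i), x.2.2.1, x.2.2.2) : PS N) := by
    rw [show ((x.1, Function.update x.2.1 i (x.2.1 i), x.2.2.1, x.2.2.2) : PS N) = x by simp]
    exact hF.hasFDerivAt
  exact h2.comp_hasDerivAt _ hc

lemma hasDerivAt_p {F : PS N → ℝ} {x : PS N} (i : Fin N) (hF : DifferentiableAt ℝ F x) :
    HasDerivAt (fun t => F (x.1, x.2.1, x.2.2.1, Function.update x.2.2.2 i t))
      (fderiv ℝ F x (vp i)) (x.2.2.2 i) := by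
  have hc : HasDerivAt (fun t => ((x.1, x.2.1, x.2.2.1, Function.update x.2.2.2 i t) : PS N))
      (vp i) (x.2.2.2 i) :=
    (hasDerivAt_const _ _).prodMk ((hasDerivAt_const _ _).prodMk
      ((hasDerivAt_const _ _).prodMk (hasDerivAt_update _ i _)))
  have h2 : HasFDerivAt F (fderiv ℝ F x)
      ((x.1, x.2.1, x.2.2.1, Function.update x.2.2.2 i (x.2.2.2 i)) : PS N) := by
    rw [show ((x.1, x.2.1, x.2.2.1, Function.update x.2.2.2 i (x.2.2.2 i)) : PS N) = x by simp]
    exact hF.hasFDerivAt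
  exact h2.comp_hasDerivAt _ hc

lemma pdu_eq {F : PS N → ℝ} {x : PS N} (hF : DifferentiableAt ℝ F x) :
    pdu F x = fderiv ℝ F x (vu N) := (hasDerivAt_u hF).deriv
lemma pdpu_eq {F : PS N → ℝ} {x : PS N} (hF : DifferentiableAt ℝ F x) :
    pdpu F x = fderiv ℝ F x (vpu N) := (hasDerivAt_pu hF).deriv
lemma pdq_eq {F : PS N → ℝ} {x : PS N} (i : Fin N) (hF : DifferentiableAt ℝ F x) :
    pdq i F x = fderiv ℝ F x (vq i) := (hasDerivAt_q i hF).deriv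
lemma pdp_eq {F : PS N → ℝ} {x : PS N} (i : Fin N) (hF : DifferentiableAt ℝ F x) :
    pdp i F x = fderiv ℝ F x (vp i) := (hasDerivAt_p i hF).deriv

end EHFI

namespace EHFI
variable {N : ℕ}

lemma contDiff_pdu {F : PS N → ℝ} (hF : ContDiff ℝ (⊤:ℕ∞) F) :
    ContDiff ℝ (⊤:ℕ∞) (pdu F) := by
  have : pdu F = fun x => fderiv ℝ F x (vu N) :=
    funext fun x => pdu_eq (hF.differentiable (by simp)).differentiableAt
  rw [this]
  exact (hF.fderiv_right (m := (⊤:ℕ∞)) (by simp)).clm_apply contDiff_const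

lemma contDiff_pdpu {F : PS N → ℝ} (hF : ContDiff ℝ (⊤:ℕ∞) F) :
    ContDiff ℝ (⊤:ℕ∞) (pdpu F) := by
  have : pdpu F = fun x => fderiv ℝ F x (vpu N) :=
    funext fun x => pdpu_eq (hF.differentiable (by simp)).differentiableAt
  rw [this]
  exact (hF.fderiv_right (m := (⊤:ℕ∞)) (by simp)).clm_apply contDiff_const

lemma contDiff_pdq {F : PS N → ℝ} (i : Fin N) (hF : ContDiff ℝ (⊤:ℕ∞) F) :
    ContDiff ℝ (⊤:ℕ∞) (pdq i F) := by
  have : pdq i F = fun x => fderiv ℝ F x (vq i) :=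
    funext fun x => pdq_eq i (hF.differentiable (by simp)).differentiableAt
  rw [this]
  exact (hF.fderiv_right (m := (⊤:ℕ∞)) (by simp)).clm_apply contDiff_const

lemma contDiff_pdp {F : PS N → ℝ} (i : Fin N) (hF : ContDiff ℝ (⊤:ℕ∞) F) :
    ContDiff ℝ (⊤:ℕ∞) (pdp i F) := by
  have : pdp i F = fun x => fderiv ℝ F x (vp i) :=
    funext fun x => pdp_eq i (hF.differentiable (by simp)).differentiableAt
  rw [this]
  exact (hF.fderiv_right (m := (⊤:ℕ∞)) (by simp)).clm_apply contDiff_const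

lemma fd_mul {f g : PS N → ℝ} {x : PS N} (v : PS N)
    (hf : DifferentiableAt ℝ f x) (hg : DifferentiableAt ℝ g x) :
    fderiv ℝ (fun y => f y * g y) x v = fderiv ℝ f x v * g x + f x * fderiv ℝ g x v := by
  rw [fderiv_fun_mul hf hg]
  simp [ContinuousLinearMap.add_apply, ContinuousLinearMap.smul_apply, smul_eq_mul]
  ring

lemma fd_add {f g : PS N → ℝ} {x : PS N} (v : PS N)
    (hf : DifferentiableAt ℝ f x) (hg : DifferentiableAt ℝ g x) :
    fderiv ℝ (fun y => f y + g y) x v = fderiv ℝ f x v + fderiv ℝ g x v := by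
  rw [fderiv_fun_add hf hg]; simp

lemma pdu_mul {f g : PS N → ℝ} {x : PS N}
    (hf : DifferentiableAt ℝ f x) (hg : DifferentiableAt ℝ g x) :
    pdu (fun y => f y * g y) x = pdu f x * g x + f x * pdu g x := by
  rw [pdu_eq (hf.fun_mul hg), fd_mul _ hf hg, ← pdu_eq hf, ← pdu_eq hg]
lemma pdpu_mul {f g : PS N → ℝ} {x : PS N}
    (hf : DifferentiableAt ℝ f x) (hg : DifferentiableAt ℝ g x) :
    pdpu (fun y => f y * g y) x = pdpu f x * g x + f x * pdpu g x := by
  rw [pdpu_eq (hf.fun_mul hg), fd_mul _ hf hg, ← pdpu_eq hf, ← pdpu_eq hg]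
lemma pdq_mul {f g : PS N → ℝ} {x : PS N} (i : Fin N)
    (hf : DifferentiableAt ℝ f x) (hg : DifferentiableAt ℝ g x) :
    pdq i (fun y => f y * g y) x = pdq i f x * g x + f x * pdq i g x := by
  rw [pdq_eq i (hf.fun_mul hg), fd_mul _ hf hg, ← pdq_eq i hf, ← pdq_eq i hg]
lemma pdp_mul {f g : PS N → ℝ} {x : PS N} (i : Fin N)
    (hf : DifferentiableAt ℝ f x) (hg : DifferentiableAt ℝ g x) :
    pdp i (fun y => f y * g y) x = pdp i f x * g x + f x * pdp i g x := by
  rw [pdp_eq i (hf.fun_mul hg), fd_mul _ hf hg, ← pdp_eq i hf, ← pdp_eq i hg]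

lemma pdu_add {f g : PS N → ℝ} {x : PS N}
    (hf : DifferentiableAt ℝ f x) (hg : DifferentiableAt ℝ g x) :
    pdu (fun y => f y + g y) x = pdu f x + pdu g x := by
  rw [pdu_eq (hf.fun_add hg), fd_add _ hf hg, ← pdu_eq hf, ← pdu_eq hg]
lemma pdpu_add {f g : PS N → ℝ} {x : PS N}
    (hf : DifferentiableAt ℝ f x) (hg : DifferentiableAt ℝ g x) :
    pdpu (fun y => f y + g y) x = pdpu f x + pdpu g x := by
  rw [pdpu_eq (hf.fun_add hg), fd_add _ hf hg, ← pdpu_eq hf, ← pdpu_eq hg]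
lemma pdq_add {f g : PS N → ℝ} {x : PS N} (i : Fin N)
    (hf : DifferentiableAt ℝ f x) (hg : DifferentiableAt ℝ g x) :
    pdq i (fun y => f y + g y) x = pdq i f x + pdq i g x := by
  rw [pdq_eq i (hf.fun_add hg), fd_add _ hf hg, ← pdq_eq i hf, ← pdq_eq i hg]
lemma pdp_add {f g : PS N → ℝ} {x : PS N} (i : Fin N)
    (hf : DifferentiableAt ℝ f x) (hg : DifferentiableAt ℝ g x) :
    pdp i (fun y => f y + g y) x = pdp i f x + pdp i g x := by
  rw [pdp_eq i (hf.fun_add hg), fd_add _ hf hg, ← pdp_eq i hf, ← pdp_eq i hg]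

lemma pdu_const (c : ℝ) (x : PS N) : pdu (fun _ => c) x = 0 := by simp [pdu]
lemma pdpu_const (c : ℝ) (x : PS N) : pdpu (fun _ => c) x = 0 := by simp [pdpu]
lemma pdq_const (i : Fin N) (c : ℝ) (x : PS N) : pdq i (fun _ => c) x = 0 := by simp [pdq]
lemma pdp_const (i : Fin N) (c : ℝ) (x : PS N) : pdp i (fun _ => c) x = 0 := by simp [pdp]

-- coordinates and γ∘u
lemma pdu_pucoord (x : PS N) : pdu (fun y => y.2.2.1) x = 0 := by simp [pdu]
lemma pdpu_pucoord (x : PS N) : pdpu (fun y => y.2.2.1) x = 1 := by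
  simp [pdpu, deriv_id']
lemma pdq_pucoord (i : Fin N) (x : PS N) : pdq i (fun y => y.2.2.1) x = 0 := by simp [pdq]
lemma pdp_pucoord (i : Fin N) (x : PS N) : pdp i (fun y => y.2.2.1) x = 0 := by simp [pdp]

lemma pdu_gamma (γ : ℝ → ℝ) (x : PS N) : pdu (fun y => γ y.1) x = deriv γ x.1 := rfl
lemma pdpu_gamma (γ : ℝ → ℝ) (x : PS N) : pdpu (fun y => γ y.1) x = 0 := by simp [pdpu]
lemma pdq_gamma (γ : ℝ → ℝ) (i : Fin N) (x : PS N) : pdq i (fun y => γ y.1) x = 0 := by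
  simp [pdq]
lemma pdp_gamma (γ : ℝ → ℝ) (i : Fin N) (x : PS N) : pdp i (fun y => γ y.1) x = 0 := by
  simp [pdp]

-- QP lemmas
lemma pdu_qp {F : PS N → ℝ} (h : QP F) (x : PS N) : pdu F x = 0 := by
  have e : (fun t => F (t, x.2.1, x.2.2.1, x.2.2.2)) = fun _ => F x :=
    funext fun t => h t x.1 x.2.2.1 x.2.2.1 x.2.1 x.2.2.2
  rw [pdu, e, deriv_const]
lemma pdpu_qp {F : PS N → ℝ} (h : QP F) (x : PS N) : pdpu F x = 0 := by
  have e : (fun t => F (x.1, x.2.1, t, x.2.2.2)) = fun _ => F x :=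
    funext fun t => h x.1 x.1 t x.2.2.1 x.2.1 x.2.2.2
  rw [pdpu, e, deriv_const]
lemma QP_pdq {F : PS N → ℝ} (i : Fin N) (h : QP F) : QP (pdq i F) := by
  intro u u' pu pu' q p
  unfold pdq
  exact congrFun (congrArg _ (funext fun t => h u u' pu pu' (Function.update q i t) p)) (q i)
lemma QP_pdp {F : PS N → ℝ} (i : Fin N) (h : QP F) : QP (pdp i F) := by
  intro u u' pu pu' q p
  unfold pdp
  exact congrFun (congrArg _ (funext fun t => h u u' pu pu' q (Function.update p i t))) (p i)

end EHFI

namespace EHFI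
variable {N : ℕ}

/-- X_L in (q,p) coordinates only. -/
def XX (L F : PS N → ℝ) (x : PS N) : ℝ :=
  ∑ i : Fin N, (pdp i L x * pdq i F x - pdq i L x * pdp i F x)

lemma smooth_diff {F : PS N → ℝ} (hF : ContDiff ℝ (⊤:ℕ∞) F) : Differentiable ℝ F :=
  hF.differentiable (by simp)

lemma XX_mul {L f g : PS N → ℝ} (x : PS N)
    (hf : Differentiable ℝ f) (hg : Differentiable ℝ g) :
    XX L (fun y => f y * g y) x = XX L f x * g x + f x * XX L g x := by
  unfold XX
  rw [show ∀ S : Fin N → ℝ, (∑ i, S i) = ∑ i, S i from fun _ => rfl]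
  have e : ∀ i : Fin N,
      (pdp i L x * pdq i (fun y => f y * g y) x - pdq i L x * pdp i (fun y => f y * g y) x)
      = (pdp i L x * pdq i f x - pdq i L x * pdp i f x) * g x
        + f x * (pdp i L x * pdq i g x - pdq i L x * pdp i g x) := by
    intro i
    rw [pdq_mul i (hf x) (hg x), pdp_mul i (hf x) (hg x)]
    ring
  rw [Finset.sum_congr rfl (fun i _ => e i), Finset.sum_add_distrib, ← Finset.sum_mul,
    ← Finset.mul_sum]

lemma XX_add {L f g : PS N → ℝ} (x : PS N)
    (hf : Differentiable ℝ f) (hg : Differentiable ℝ g) :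
    XX L (fun y => f y + g y) x = XX L f x + XX L g x := by
  unfold XX
  have e : ∀ i : Fin N,
      (pdp i L x * pdq i (fun y => f y + g y) x - pdq i L x * pdp i (fun y => f y + g y) x)
      = (pdp i L x * pdq i f x - pdq i L x * pdp i f x)
        + (pdp i L x * pdq i g x - pdq i L x * pdp i g x) := by
    intro i
    rw [pdq_add i (hf x) (hg x), pdp_add i (hf x) (hg x)]
    ring
  rw [Finset.sum_congr rfl (fun i _ => e i), Finset.sum_add_distrib]

lemma XX_const (L : PS N → ℝ) (c : ℝ) (x : PS N) : XX L (fun _ => c) x = 0 := by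
  unfold XX
  exact Finset.sum_eq_zero fun i _ => by rw [pdq_const, pdp_const]; ring

lemma XX_const_mul {L f : PS N → ℝ} (a : ℝ) (x : PS N) (hf : Differentiable ℝ f) :
    XX L (fun y => a * f y) x = a * XX L f x := by
  rw [XX_mul x (differentiable_const a) hf, XX_const]
  ring

lemma XX_pucoord (L : PS N → ℝ) (x : PS N) : XX L (fun y => y.2.2.1) x = 0 := by
  unfold XX
  exact Finset.sum_eq_zero fun i _ => by rw [pdq_pucoord, pdp_pucoord]; ring

lemma XX_gamma (L : PS N → ℝ) (γ : ℝ → ℝ) (x : PS N) : XX L (fun y => γ y.1) x = 0 := by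
  unfold XX
  exact Finset.sum_eq_zero fun i _ => by rw [pdq_gamma, pdp_gamma]; ring

lemma contDiff_XX {L F : PS N → ℝ} (hL : ContDiff ℝ (⊤:ℕ∞) L) (hF : ContDiff ℝ (⊤:ℕ∞) F) :
    ContDiff ℝ (⊤:ℕ∞) (XX L F) := by
  have : XX L F = fun x => ∑ i : Fin N,
      (pdp i L x * pdq i F x - pdq i L x * pdp i F x) := rfl
  rw [this]
  exact ContDiff.sum fun i _ =>
    ((contDiff_pdp i hL).mul (contDiff_pdq i hF)).sub
      ((contDiff_pdq i hL).mul (contDiff_pdp i hF))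

lemma QP_XX {L F : PS N → ℝ} (hL : QP L) (hF : QP F) : QP (XX L F) := by
  intro u u' pu pu' q p
  unfold XX
  exact Finset.sum_congr rfl fun i _ => by
    rw [QP_pdp i hL u u' pu pu' q p, QP_pdq i hL u u' pu pu' q p,
      QP_pdp i hF u u' pu pu' q p, QP_pdq i hF u u' pu pu' q p]

lemma QP_mul {f g : PS N → ℝ} (hf : QP f) (hg : QP g) : QP (fun y => f y * g y) :=
  fun u u' pu pu' q p => by simp only []; rw [hf u u' pu pu' q p, hg u u' pu pu' q p]
lemma QP_add {f g : PS N → ℝ} (hf : QP f) (hg : QP g) : QP (fun y => f y + g y) :=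
  fun u u' pu pu' q p => by simp only []; rw [hf u u' pu pu' q p, hg u u' pu pu' q p]
lemma QP_const (c : ℝ) : QP (fun _ : PS N => c) := fun _ _ _ _ _ _ => rfl

/-- recursion for the coefficient functions α_j, β_j -/
def AB (mR aR : ℝ) (W : PS N → ℝ) (γ : ℝ → ℝ) : ℕ → (PS N → ℝ) × (PS N → ℝ)
  | 0 => (fun _ => 1, fun _ => 0)
  | j+1 =>
    (fun x => x.2.2.1 * (AB mR aR W γ j).1 x + mR * W x * γ x.1 * (AB mR aR W γ j).2 x,
     fun x => x.2.2.1 * (AB mR aR W γ j).2 x + aR * γ x.1 * (AB mR aR W γ j).1 x)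

end EHFI


open EHFI in
/-- For an extension `H = ½p_u² - k²γ'L + k²c₀γ²` (with `Ω = 0`) of a
Hamiltonian `L` admitting a solution `G` of `X_L²G = -2(cL+c₀)G`, the characteristic
function `K_{m,n} = U^m(G_n)` Poisson-commutes with `H` over the interval `I`. -/
theorem extended_hamiltonian_first_integral
    (N : ℕ) (hN : 1 ≤ N) (m n : ℕ) (hm : 0 < m) (hn : 0 < n)
    (c c₀ C : ℝ) (L G : PS N → ℝ)
    (hLsmooth : ContDiff ℝ (⊤ : ℕ∞) L) (hGsmooth : ContDiff ℝ (⊤ : ℕ∞) G)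
    (hLqp : ∀ (u u' pu pu' : ℝ) (q p : Fin N → ℝ),
      L (u, q, pu, p) = L (u', q, pu', p))
    (hGqp : ∀ (u u' pu pu' : ℝ) (q p : Fin N → ℝ),
      G (u, q, pu, p) = G (u', q, pu', p))
    (hext : ∀ x : PS N, XL L (XL L G) x = -2 * (c * L x + c₀) * G x)
    (I : Set ℝ) (hIopen : IsOpen I) (hIconn : I.OrdConnected) (hInonempty : I.Nonempty)
    (γ : ℝ → ℝ) (hγ : ContDiff ℝ (⊤ : ℕ∞) γ)
    (hode : ∀ u ∈ I, deriv γ u + c * γ u ^ 2 + C = 0)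
    (Gs : ℕ → PS N → ℝ) (hGs1 : Gs 1 = G)
    (hGsrec : ∀ j : ℕ, 1 ≤ j → Gs (j + 1) =
      fun x => XL L G x * Gs j x + (1 / (j : ℝ)) * G x * XL L (Gs j) x)
    (U : (PS N → ℝ) → PS N → ℝ)
    (hU : ∀ (h : PS N → ℝ) (x : PS N),
      U h x = x.2.2.1 * h x + ((m : ℝ) / (n : ℝ) ^ 2) * γ x.1 * XL L h x)
    (K : PS N → ℝ) (hK : K = U^[m] (Gs n))
    (H : PS N → ℝ)
    (hH : ∀ x : PS N, H x = (1 / 2) * x.2.2.1 ^ 2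
      - ((m : ℝ) / (n : ℝ)) ^ 2 * deriv γ x.1 * L x
      + ((m : ℝ) / (n : ℝ)) ^ 2 * c₀ * γ x.1 ^ 2) :
    ∀ x : PS N, x.1 ∈ I → pbracket H K x = 0 := by
  have hLs : ContDiff ℝ (⊤:ℕ∞) L := hLsmooth.of_le (by simp)
  have hGsm : ContDiff ℝ (⊤:ℕ∞) G := hGsmooth.of_le (by simp)
  have hγs : ContDiff ℝ (⊤:ℕ∞) γ := hγ.of_le (by simp)
  have hLqp' : QP L := hLqp
  have hGqp' : QP G := hGqp
  have hXLXX : XL L = XX L := funext fun F => funext fun x => by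
    unfold XL pbracket XX
    rw [pdu_qp hLqp', pdpu_qp hLqp']
    ring
  set W : PS N → ℝ := fun y => -2 * (c * L y + c₀) with hWdef
  have hWs : ContDiff ℝ (⊤:ℕ∞) W :=
    contDiff_const.mul ((contDiff_const.mul hLs).add contDiff_const)
  have hWqp : QP W := fun u u' pu pu' q p => by
    simp only [hWdef]; rw [hLqp u u' pu pu' q p]
  have hdL : Differentiable ℝ L := smooth_diff hLs
  have hdG : Differentiable ℝ G := smooth_diff hGsm
  have hdW : Differentiable ℝ W := smooth_diff hWs
  have hWalt : W = fun y => (-2*c) * L y + (-2*c₀) := funext fun y => by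
    simp only [hWdef]; ring
  have hpdqW : ∀ (i : Fin N) (x : PS N), pdq i W x = -2 * c * pdq i L x := by
    intro i x
    rw [hWalt, pdq_add i ((hdL.const_mul (-2*c)) x) (differentiableAt_const _),
      pdq_mul i (differentiableAt_const _) (hdL x), pdq_const, pdq_const]
    ring
  have hpdpW : ∀ (i : Fin N) (x : PS N), pdp i W x = -2 * c * pdp i L x := by
    intro i x
    rw [hWalt, pdp_add i ((hdL.const_mul (-2*c)) x) (differentiableAt_const _),
      pdp_mul i (differentiableAt_const _) (hdL x), pdp_const, pdp_const]
    ring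
  have hXXW : ∀ x, XX L W x = 0 := by
    intro x
    unfold XX
    exact Finset.sum_eq_zero fun i _ => by rw [hpdqW i x, hpdpW i x]; ring
  have hx2G : ∀ y, XX L (XX L G) y = W y * G y := by
    intro y
    have h2 := hext y
    rw [hXLXX] at h2
    rw [h2]
  have hdP : Differentiable ℝ (XX L G) := smooth_diff (contDiff_XX hLs hGsm)
  have hGsfacts : ∀ j, 1 ≤ j → ContDiff ℝ (⊤:ℕ∞) (Gs j) ∧ QP (Gs j) ∧
      ∀ y, XX L (XX L (Gs j)) y = (j:ℝ)^2 * W y * Gs j y := by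
    intro j hj
    induction j, hj using Nat.le_induction with
    | base =>
      rw [hGs1]
      refine ⟨hGsm, hGqp', fun y => ?_⟩
      rw [hx2G y]; push_cast; ring
    | succ j hj ih =>
      obtain ⟨ihs, ihqp, ihx2⟩ := ih
      have hj0 : (j:ℝ) ≠ 0 := Nat.cast_ne_zero.mpr (by omega)
      have hrec := hGsrec j hj
      rw [hXLXX] at hrec
      have hdGsj : Differentiable ℝ (Gs j) := smooth_diff ihs
      have hdVj : Differentiable ℝ (XX L (Gs j)) := smooth_diff (contDiff_XX hLs ihs)
      have hs' : ContDiff ℝ (⊤:ℕ∞) (Gs (j+1)) := by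
        rw [hrec]
        exact ((contDiff_XX hLs hGsm).mul ihs).add
          ((contDiff_const.mul hGsm).mul (contDiff_XX hLs ihs))
      have hqp' : QP (Gs (j+1)) := by
        rw [hrec]
        intro u u' pu pu' q p
        simp only []
        rw [QP_XX hLqp' hGqp' u u' pu pu' q p, ihqp u u' pu pu' q p,
          hGqp u u' pu pu' q p, QP_XX hLqp' ihqp u u' pu pu' q p]
      have h1 : XX L (Gs (j+1)) = fun y =>
          ((j:ℝ)+1) * (W y * G y * Gs j y) + (((j:ℝ)+1)/(j:ℝ)) * (XX L G y * XX L (Gs j) y) :=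
        funext fun y => by
          rw [hrec, XX_add y (hdP.fun_mul hdGsj) ((hdG.const_mul _).fun_mul hdVj),
            XX_mul y hdP hdGsj, XX_mul y (hdG.const_mul _) hdVj,
            XX_const_mul _ y hdG, hx2G y, ihx2 y]
          field_simp
          ring
      refine ⟨hs', hqp', fun y => ?_⟩
      rw [h1]
      rw [XX_add y (((hdW.fun_mul hdG).fun_mul hdGsj).const_mul _) ((hdP.fun_mul hdVj).const_mul _),
        XX_const_mul _ y ((hdW.fun_mul hdG).fun_mul hdGsj), XX_const_mul _ y (hdP.fun_mul hdVj),
        XX_mul y (hdW.fun_mul hdG) hdGsj, XX_mul y hdW hdG,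
        XX_mul y hdP hdVj, hXXW y, hx2G y, ihx2 y]
      simp only [hrec]
      push_cast
      field_simp
      ring
  -- Stage 2: the coefficient functions
  have hn2 : (n:ℝ) ≠ 0 := Nat.cast_ne_zero.mpr (by omega)
  obtain ⟨hFs, hFqp, hX2F⟩ := hGsfacts n hn
  have hVs : ContDiff ℝ (⊤:ℕ∞) (XX L (Gs n)) := contDiff_XX hLs hFs
  have hVqp : QP (XX L (Gs n)) := QP_XX hLqp' hFqp
  have hdF : Differentiable ℝ (Gs n) := smooth_diff hFs
  have hdV : Differentiable ℝ (XX L (Gs n)) := smooth_diff hVs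
  set A : ℕ → PS N → ℝ := fun j => (AB (N:=N) ((m:ℝ)) ((m:ℝ)/(n:ℝ)^2) W γ j).1 with hA
  set B : ℕ → PS N → ℝ := fun j => (AB (N:=N) ((m:ℝ)) ((m:ℝ)/(n:ℝ)^2) W γ j).2 with hB
  have hA0 : A 0 = fun _ => 1 := rfl
  have hB0 : B 0 = fun _ => 0 := rfl
  have hAsucc : ∀ j, A (j+1) = fun x => x.2.2.1 * A j x + ((m:ℝ)) * W x * γ x.1 * B j x :=
    fun j => rfl
  have hBsucc : ∀ j, B (j+1) = fun x => x.2.2.1 * B j x + ((m:ℝ)/(n:ℝ)^2) * γ x.1 * A j x :=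
    fun j => rfl
  have hpuc : ContDiff ℝ (⊤:ℕ∞) (fun y : PS N => y.2.2.1) := by fun_prop
  have hγuc : ContDiff ℝ (⊤:ℕ∞) (fun y : PS N => γ y.1) := hγs.comp contDiff_fst
  have dpu : Differentiable ℝ (fun y : PS N => y.2.2.1) := smooth_diff hpuc
  have dγu : Differentiable ℝ (fun y : PS N => γ y.1) := smooth_diff hγuc
  have hABs : ∀ j, ContDiff ℝ (⊤:ℕ∞) (A j) ∧ ContDiff ℝ (⊤:ℕ∞) (B j) := by
    intro j
    induction j with
    | zero => exact ⟨contDiff_const, contDiff_const⟩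
    | succ j ih =>
      constructor
      · rw [hAsucc]
        exact (hpuc.mul ih.1).add (((contDiff_const.mul hWs).mul hγuc).mul ih.2)
      · rw [hBsucc]
        exact (hpuc.mul ih.2).add ((contDiff_const.mul hγuc).mul ih.1)
  have hXXAB : ∀ j x, XX L (A j) x = 0 ∧ XX L (B j) x = 0 := by
    intro j
    induction j with
    | zero => intro x; exact ⟨XX_const L 1 x, XX_const L 0 x⟩
    | succ j ih =>
      intro x
      have dA : Differentiable ℝ (A j) := smooth_diff (hABs j).1
      have dB : Differentiable ℝ (B j) := smooth_diff (hABs j).2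
      constructor
      · rw [hAsucc j]
        rw [XX_add x (dpu.fun_mul dA) (((hdW.const_mul ((m:ℝ))).fun_mul dγu).fun_mul dB),
          XX_mul x dpu dA, XX_mul x ((hdW.const_mul ((m:ℝ))).fun_mul dγu) dB,
          XX_mul x (hdW.const_mul ((m:ℝ))) dγu, XX_const_mul ((m:ℝ)) x hdW,
          XX_pucoord, XX_gamma, hXXW x, (ih x).1, (ih x).2]
        ring
      · rw [hBsucc j]
        rw [XX_add x (dpu.fun_mul dB) ((dγu.const_mul ((m:ℝ)/(n:ℝ)^2)).fun_mul dA),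
          XX_mul x dpu dB, XX_mul x (dγu.const_mul ((m:ℝ)/(n:ℝ)^2)) dA,
          XX_const_mul ((m:ℝ)/(n:ℝ)^2) x dγu, XX_pucoord, XX_gamma, (ih x).1, (ih x).2]
        ring
  -- Stage 3: the key derivative identities E1/E2
  have hE : ∀ j : ℕ,
      (∀ x : PS N, x.2.2.1 * pdu (A j) x
          + ((m:ℝ)*((m:ℝ)/(n:ℝ)^2)) * γ x.1 * deriv γ x.1 * W x * pdpu (A j) x
        = deriv γ x.1 * (j:ℝ) * ((m:ℝ)) * W x * B j x)
      ∧ (∀ x : PS N, x.2.2.1 * pdu (B j) x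
          + ((m:ℝ)*((m:ℝ)/(n:ℝ)^2)) * γ x.1 * deriv γ x.1 * W x * pdpu (B j) x
        = deriv γ x.1 * ((m:ℝ)/(n:ℝ)^2) * (j:ℝ) * A j x) := by
    intro j
    induction j with
    | zero =>
      constructor <;> intro x <;>
        simp [hA0, hB0, pdu_const, pdpu_const]
    | succ j ih =>
      obtain ⟨ih1, ih2⟩ := ih
      have dA : Differentiable ℝ (A j) := smooth_diff (hABs j).1
      have dB : Differentiable ℝ (B j) := smooth_diff (hABs j).2
      have h1 : ∀ x : PS N, pdu (A (j+1)) x = x.2.2.1 * pdu (A j) x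
          + ((m:ℝ)) * W x * deriv γ x.1 * B j x + ((m:ℝ)) * W x * γ x.1 * pdu (B j) x := by
        intro x
        conv_lhs => rw [hAsucc j]
        rw [pdu_add ((dpu.fun_mul dA) x) ((((hdW.const_mul ((m:ℝ))).fun_mul dγu).fun_mul dB) x),
          pdu_mul (dpu x) (dA x),
          pdu_mul (((hdW.const_mul ((m:ℝ))).fun_mul dγu) x) (dB x),
          pdu_mul ((hdW.const_mul ((m:ℝ))) x) (dγu x),
          pdu_mul (differentiableAt_const ((m:ℝ))) (hdW x),
          pdu_const, pdu_pucoord, pdu_gamma, pdu_qp hWqp]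
        ring
      have h2 : ∀ x : PS N, pdpu (A (j+1)) x = A j x + x.2.2.1 * pdpu (A j) x
          + ((m:ℝ)) * W x * γ x.1 * pdpu (B j) x := by
        intro x
        conv_lhs => rw [hAsucc j]
        rw [pdpu_add ((dpu.fun_mul dA) x) ((((hdW.const_mul ((m:ℝ))).fun_mul dγu).fun_mul dB) x),
          pdpu_mul (dpu x) (dA x),
          pdpu_mul (((hdW.const_mul ((m:ℝ))).fun_mul dγu) x) (dB x),
          pdpu_mul ((hdW.const_mul ((m:ℝ))) x) (dγu x),
          pdpu_mul (differentiableAt_const ((m:ℝ))) (hdW x),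
          pdpu_const, pdpu_pucoord, pdpu_gamma, pdpu_qp hWqp]
        ring
      have h3 : ∀ x : PS N, pdu (B (j+1)) x = x.2.2.1 * pdu (B j) x
          + ((m:ℝ)/(n:ℝ)^2) * deriv γ x.1 * A j x + ((m:ℝ)/(n:ℝ)^2) * γ x.1 * pdu (A j) x := by
        intro x
        conv_lhs => rw [hBsucc j]
        rw [pdu_add ((dpu.fun_mul dB) x) (((dγu.const_mul ((m:ℝ)/(n:ℝ)^2)).fun_mul dA) x),
          pdu_mul (dpu x) (dB x),
          pdu_mul ((dγu.const_mul ((m:ℝ)/(n:ℝ)^2)) x) (dA x),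
          pdu_mul (differentiableAt_const ((m:ℝ)/(n:ℝ)^2)) (dγu x),
          pdu_const, pdu_pucoord, pdu_gamma]
        ring
      have h4 : ∀ x : PS N, pdpu (B (j+1)) x = B j x + x.2.2.1 * pdpu (B j) x
          + ((m:ℝ)/(n:ℝ)^2) * γ x.1 * pdpu (A j) x := by
        intro x
        conv_lhs => rw [hBsucc j]
        rw [pdpu_add ((dpu.fun_mul dB) x) (((dγu.const_mul ((m:ℝ)/(n:ℝ)^2)).fun_mul dA) x),
          pdpu_mul (dpu x) (dB x),
          pdpu_mul ((dγu.const_mul ((m:ℝ)/(n:ℝ)^2)) x) (dA x),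
          pdpu_mul (differentiableAt_const ((m:ℝ)/(n:ℝ)^2)) (dγu x),
          pdpu_const, pdpu_pucoord, pdpu_gamma]
        ring
      constructor
      · intro x
        rw [h1 x, h2 x, hBsucc j]
        simp only []
        push_cast
        linear_combination x.2.2.1 * ih1 x + (((m:ℝ)) * W x * γ x.1) * ih2 x
      · intro x
        rw [h3 x, h4 x, hAsucc j]
        simp only []
        push_cast
        linear_combination x.2.2.1 * ih2 x + (((m:ℝ)/(n:ℝ)^2) * γ x.1) * ih1 x
  -- Stage 4: expansion of the iterates of U
  have hUiter : ∀ j (x : PS N),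
      (U^[j] (Gs n)) x = A j x * Gs n x + B j x * XX L (Gs n) x := by
    intro j
    induction j with
    | zero => intro x; simp [hA0, hB0]
    | succ j ih =>
      intro x
      have hfn : U^[j] (Gs n) = fun y => A j y * Gs n y + B j y * XX L (Gs n) y := funext ih
      have dA : Differentiable ℝ (A j) := smooth_diff (hABs j).1
      have dB : Differentiable ℝ (B j) := smooth_diff (hABs j).2
      rw [Function.iterate_succ_apply', hU (U^[j] (Gs n)) x, hXLXX, hfn,
        XX_add x (dA.fun_mul hdF) (dB.fun_mul hdV), XX_mul x dA hdF, XX_mul x dB hdV,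
        (hXXAB j x).1, (hXXAB j x).2, hX2F x, hAsucc j, hBsucc j]
      simp only []
      field_simp
      ring
  -- Stage 5: final assembly
  intro x hx
  have hγd : HasDerivAt γ (deriv γ x.1) x.1 :=
    ((hγs.differentiable (by simp)) x.1).hasDerivAt
  have hγ'd : HasDerivAt (deriv γ) (deriv (deriv γ) x.1) x.1 :=
    (((contDiff_infty_iff_deriv.mp hγs).2.differentiable (by simp)) x.1).hasDerivAt
  have hγ'' : deriv (deriv γ) x.1 = -(c*(2*γ x.1*deriv γ x.1)) := by
    have hev : deriv γ =ᶠ[nhds x.1] fun u => -(c*γ u^2) - C := by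
      filter_upwards [hIopen.mem_nhds hx] with u hu
      have := hode u hu
      linarith
    rw [hev.deriv_eq]
    have hder2 : HasDerivAt (fun u => -(c*γ u^2) - C) (-(c*(2*γ x.1*deriv γ x.1))) x.1 := by
      have h0 := (((hγd.fun_pow 2).const_mul c).neg).sub_const C
      refine h0.congr_deriv ?_
      push_cast
      ring
    exact hder2.deriv
  -- partial derivatives of H
  have hpdpuH : pdpu H x = x.2.2.1 := by
    have e : (fun t => H (x.1, x.2.1, t, x.2.2.2)) = fun t => 1/2*t^2 +
        (-(((m:ℝ)/(n:ℝ))^2 * deriv γ x.1 * L x) + ((m:ℝ)/(n:ℝ))^2*c₀*γ x.1^2) :=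
      funext fun t => by
        rw [hH (x.1, x.2.1, t, x.2.2.2), hLqp x.1 x.1 t x.2.2.1 x.2.1 x.2.2.2]
        ring
    unfold pdpu
    rw [e]
    have hd : HasDerivAt (fun t : ℝ => 1/2*t^2 +
        (-(((m:ℝ)/(n:ℝ))^2 * deriv γ x.1 * L x) + ((m:ℝ)/(n:ℝ))^2*c₀*γ x.1^2))
        x.2.2.1 x.2.2.1 := by
      have h0 := ((hasDerivAt_pow 2 x.2.2.1).const_mul (1/2:ℝ)).add_const
        (-(((m:ℝ)/(n:ℝ))^2 * deriv γ x.1 * L x) + ((m:ℝ)/(n:ℝ))^2*c₀*γ x.1^2)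
      refine h0.congr_deriv ?_
      push_cast
      ring
    exact hd.deriv
  have hpduH : pdu H x = -(((m:ℝ)/(n:ℝ))^2 * γ x.1 * deriv γ x.1 * W x) := by
    have e : (fun t => H (t, x.2.1, x.2.2.1, x.2.2.2)) = fun t => 1/2*x.2.2.1^2
        - ((m:ℝ)/(n:ℝ))^2 * deriv γ t * L x + ((m:ℝ)/(n:ℝ))^2*c₀*γ t^2 :=
      funext fun t => by
        rw [hH (t, x.2.1, x.2.2.1, x.2.2.2), hLqp t x.1 x.2.2.1 x.2.2.1 x.2.1 x.2.2.2]
    unfold pdu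
    rw [e]
    have hd : HasDerivAt (fun t : ℝ => 1/2*x.2.2.1^2
        - ((m:ℝ)/(n:ℝ))^2 * deriv γ t * L x + ((m:ℝ)/(n:ℝ))^2*c₀*γ t^2)
        (-(((m:ℝ)/(n:ℝ))^2 * deriv (deriv γ) x.1 * L x)
          + ((m:ℝ)/(n:ℝ))^2*c₀*(2*γ x.1*deriv γ x.1)) x.1 := by
      have h0 := ((((hγ'd.const_mul (((m:ℝ)/(n:ℝ))^2)).mul_const (L x)).const_sub
        (1/2*x.2.2.1^2)).add ((hγd.fun_pow 2).const_mul (((m:ℝ)/(n:ℝ))^2*c₀)))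
      refine h0.congr_deriv ?_
      push_cast
      ring
    rw [hd.deriv, hγ'']
    simp only [hWdef]
    ring
  have hpdqH : ∀ i : Fin N, pdq i H x = -(((m:ℝ)/(n:ℝ))^2 * deriv γ x.1 * pdq i L x) := by
    intro i
    have hLq := hasDerivAt_q (F:=L) (x:=x) i (hdL x)
    rw [← pdq_eq i (hdL x)] at hLq
    have e : (fun t => H (x.1, Function.update x.2.1 i t, x.2.2.1, x.2.2.2)) =
        fun t => 1/2*x.2.2.1^2 - ((m:ℝ)/(n:ℝ))^2 * deriv γ x.1 *
          L (x.1, Function.update x.2.1 i t, x.2.2.1, x.2.2.2) + ((m:ℝ)/(n:ℝ))^2*c₀*γ x.1^2 :=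
      funext fun t => by rw [hH (x.1, Function.update x.2.1 i t, x.2.2.1, x.2.2.2)]
    unfold pdq
    rw [e]
    have hd := (((hLq.const_mul (((m:ℝ)/(n:ℝ))^2 * deriv γ x.1)).const_sub
      (1/2*x.2.2.1^2)).add_const (((m:ℝ)/(n:ℝ))^2*c₀*γ x.1^2))
    have e2 : (fun t => 1/2*x.2.2.1^2 - ((m:ℝ)/(n:ℝ))^2 * deriv γ x.1 *
          L (x.1, Function.update x.2.1 i t, x.2.2.1, x.2.2.2) + ((m:ℝ)/(n:ℝ))^2*c₀*γ x.1^2)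
        = fun t => (1/2*x.2.2.1^2 - ((m:ℝ)/(n:ℝ))^2 * deriv γ x.1 *
          L (x.1, Function.update x.2.1 i t, x.2.2.1, x.2.2.2)) + ((m:ℝ)/(n:ℝ))^2*c₀*γ x.1^2 :=
      funext fun t => by ring
    rw [e2, hd.deriv]
    unfold pdq
    ring
  have hpdpH : ∀ i : Fin N, pdp i H x = -(((m:ℝ)/(n:ℝ))^2 * deriv γ x.1 * pdp i L x) := by
    intro i
    have hLp := hasDerivAt_p (F:=L) (x:=x) i (hdL x)
    rw [← pdp_eq i (hdL x)] at hLp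
    have e : (fun t => H (x.1, x.2.1, x.2.2.1, Function.update x.2.2.2 i t)) =
        fun t => 1/2*x.2.2.1^2 - ((m:ℝ)/(n:ℝ))^2 * deriv γ x.1 *
          L (x.1, x.2.1, x.2.2.1, Function.update x.2.2.2 i t) + ((m:ℝ)/(n:ℝ))^2*c₀*γ x.1^2 :=
      funext fun t => by rw [hH (x.1, x.2.1, x.2.2.1, Function.update x.2.2.2 i t)]
    unfold pdp
    rw [e]
    have hd := (((hLp.const_mul (((m:ℝ)/(n:ℝ))^2 * deriv γ x.1)).const_sub
      (1/2*x.2.2.1^2)).add_const (((m:ℝ)/(n:ℝ))^2*c₀*γ x.1^2))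
    have e2 : (fun t => 1/2*x.2.2.1^2 - ((m:ℝ)/(n:ℝ))^2 * deriv γ x.1 *
          L (x.1, x.2.1, x.2.2.1, Function.update x.2.2.2 i t) + ((m:ℝ)/(n:ℝ))^2*c₀*γ x.1^2)
        = fun t => (1/2*x.2.2.1^2 - ((m:ℝ)/(n:ℝ))^2 * deriv γ x.1 *
          L (x.1, x.2.1, x.2.2.1, Function.update x.2.2.2 i t)) + ((m:ℝ)/(n:ℝ))^2*c₀*γ x.1^2 :=
      funext fun t => by ring
    rw [e2, hd.deriv]
    unfold pdp
    ring
  -- partial derivatives of K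
  have hKfun : K = fun y => A m y * Gs n y + B m y * XX L (Gs n) y := by
    rw [hK]; exact funext (hUiter m)
  have dAm : Differentiable ℝ (A m) := smooth_diff (hABs m).1
  have dBm : Differentiable ℝ (B m) := smooth_diff (hABs m).2
  have hpduK : pdu K x = pdu (A m) x * Gs n x + pdu (B m) x * XX L (Gs n) x := by
    rw [hKfun, pdu_add ((dAm.fun_mul hdF) x) ((dBm.fun_mul hdV) x), pdu_mul (dAm x) (hdF x),
      pdu_mul (dBm x) (hdV x), pdu_qp hFqp, pdu_qp hVqp]
    ring
  have hpdpuK : pdpu K x = pdpu (A m) x * Gs n x + pdpu (B m) x * XX L (Gs n) x := by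
    rw [hKfun, pdpu_add ((dAm.fun_mul hdF) x) ((dBm.fun_mul hdV) x), pdpu_mul (dAm x) (hdF x),
      pdpu_mul (dBm x) (hdV x), pdpu_qp hFqp, pdpu_qp hVqp]
    ring
  have hXXK : XX L K x = A m x * XX L (Gs n) x + B m x * ((n:ℝ)^2 * W x * Gs n x) := by
    rw [hKfun, XX_add x (dAm.fun_mul hdF) (dBm.fun_mul hdV), XX_mul x dAm hdF, XX_mul x dBm hdV,
      (hXXAB m x).1, (hXXAB m x).2, hX2F x]
    ring
  have hsum : ∑ i : Fin N, (pdp i H x * pdq i K x - pdq i H x * pdp i K x)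
      = -(((m:ℝ)/(n:ℝ))^2 * deriv γ x.1) * XX L K x := by
    unfold XX
    rw [Finset.mul_sum]
    apply Finset.sum_congr rfl
    intro i _
    rw [hpdqH i, hpdpH i]
    ring
  unfold pbracket
  rw [hsum, hXXK, hpduK, hpdpuK, hpduH, hpdpuH]
  have E1 := (hE m).1 x
  have E2 := (hE m).2 x
  have haRn : ((m:ℝ)/(n:ℝ)^2) * (n:ℝ)^2 = (m:ℝ) := by field_simp
  have hk2 : ((m:ℝ)/(n:ℝ))^2 = (m:ℝ)*((m:ℝ)/(n:ℝ)^2) := by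
    field_simp
  linear_combination (Gs n x) * E1 + (XX L (Gs n) x) * E2 -
    (deriv γ x.1 * W x * B m x * Gs n x * (m:ℝ)) * haRn
end
end

section
/- Let A be a commutative ℚ-algebra and D : A → A a derivation. Let f, G, p, γ ∈ A with D(f) = 0, D(G) = f·G, D(p) = 0 and D(γ) = 0. Define the sequence G_1 = G, G_{j+1} = D(G)·G_j + (1/j)·G·D(G_j), and for positive integers m, n define the map U : A → A by U(h) = p·h + (m/n²)·γ·D(h). Then the m-th iterate of U applied to G_n factorizes as U^m(G_n) = (2f)^{n−1}·G^n·(p + (m/n)·γ·f)^m. -/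
/-- In a commutative ℚ-algebra with a derivation `D`, given a ladder
element `G` (`D G = f·G`, `D f = 0`) and elements `p, γ` with `D p = D γ = 0`, the `m`-th
iterate of the operator `U(h) = p·h + (m/n²)·γ·D(h)` applied to the recursively defined
`G_n` factorizes as `U^m(G_n) = (2f)^{n-1} · Gⁿ · (p + (m/n)·γ·f)^m`. -/
theorem characteristic_integral_factorization
    (A : Type*) [CommRing A] [Algebra ℚ A]
    (D : A → A)
    (hadd : ∀ a b : A, D (a + b) = D a + D b)
    (hleibniz : ∀ a b : A, D (a * b) = a * D b + D a * b)
    (f G p γ : A) (hf : D f = 0) (hG : D G = f * G) (hp : D p = 0) (hγ : D γ = 0)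
    (Gs : ℕ → A) (hGs1 : Gs 1 = G)
    (hGsrec : ∀ j : ℕ, 1 ≤ j →
      Gs (j + 1) = D G * Gs j + ((j : ℚ)⁻¹ • (G * D (Gs j))))
    (m n : ℕ) (hm : 1 ≤ m) (hn : 1 ≤ n)
    (U : A → A)
    (hU : ∀ h : A, U h = p * h + ((m : ℚ) / (n : ℚ) ^ 2) • (γ * D h)) :
    U^[m] (Gs n) = (2 * f) ^ (n - 1) * G ^ n * (p + ((m : ℚ) / (n : ℚ)) • (γ * f)) ^ m := by
  have hnQ : (n : ℚ) ≠ 0 := Nat.cast_ne_zero.mpr (by omega)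
  have h0 : D 0 = 0 := by
    have := hadd 0 0; simp at this; linear_combination (norm := abel) this
  set F : A →+ A := ⟨⟨D, h0⟩, hadd⟩ with hF
  have hsmul : ∀ (q : ℚ) (a : A), D (q • a) = q • D a := fun q a => map_rat_smul F q a
  have h1 : D 1 = 0 := by
    have := hleibniz 1 1; simp at this
    linear_combination (norm := abel) this
  have hGpow : ∀ j : ℕ, D (G ^ j) = (j : ℚ) • (f * G ^ j) := by
    intro j; induction j with
    | zero => simp [h1]
    | succ j ih =>
        rw [pow_succ, hleibniz, hG, ih]
        push_cast
        rw [add_smul, one_smul, smul_mul_assoc, mul_assoc, add_comm]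
        congr 1
        ring
  have h2f : D (2 * f) = 0 := by
    have : (2 : A) * f = f + f := by ring
    rw [this, hadd, hf]; simp
  have hpow0 : ∀ (x : A), D x = 0 → ∀ k : ℕ, D (x ^ k) = 0 := by
    intro x hx k; induction k with
    | zero => simpa using h1
    | succ k ih => rw [pow_succ, hleibniz, hx, ih]; simp
  have hDform : ∀ j : ℕ, D ((2 * f) ^ (j - 1) * G ^ j)
      = (j : ℚ) • (f * ((2 * f) ^ (j - 1) * G ^ j)) := by
    intro j
    rw [hleibniz, hpow0 _ h2f, hGpow, zero_mul, add_zero, mul_smul_comm]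
    rw [mul_left_comm]
  have hGsform : ∀ j : ℕ, 1 ≤ j → Gs j = (2 * f) ^ (j - 1) * G ^ j := by
    intro j hj
    induction j with
    | zero => omega
    | succ j ih =>
        rcases Nat.eq_or_lt_of_le hj with h | h
        · simp [← h, hGs1]
        · have hj1 : 1 ≤ j := by omega
          have hjQ : (j : ℚ) ≠ 0 := Nat.cast_ne_zero.mpr (by omega)
          rw [hGsrec j hj1, ih hj1, hDform j, hG, mul_smul_comm, smul_smul,
            inv_mul_cancel₀ hjQ, one_smul, Nat.add_sub_cancel]
          obtain ⟨i, rfl⟩ : ∃ i, j = i + 1 := ⟨j - 1, by omega⟩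
          rw [Nat.add_sub_cancel, pow_succ (2 * f), pow_succ G (i + 1)]
          ring
  set c : A := p + ((m : ℚ) / (n : ℚ)) • (γ * f) with hc
  have hDγf : D (γ * f) = 0 := by rw [hleibniz, hf, hγ]; simp
  have hDc : D c = 0 := by rw [hc, hadd, hp, hsmul, hDγf]; simp
  have hDW : D (Gs n) = (n : ℚ) • (f * Gs n) := by
    rw [hGsform n hn]; exact hDform n
  have hmn : (m : ℚ) / (n : ℚ) ^ 2 * (n : ℚ) = (m : ℚ) / (n : ℚ) := by
    field_simp
  have key : ∀ k : ℕ, U^[k] (Gs n) = c ^ k * Gs n := by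
    intro k; induction k with
    | zero => simp
    | succ k ih =>
        rw [Function.iterate_succ_apply', ih, hU, hleibniz, hpow0 c hDc, hDW,
          zero_mul, add_zero, mul_smul_comm, mul_smul_comm, smul_smul, hmn, pow_succ]
        conv_rhs => rw [hc, mul_add, add_mul, mul_smul_comm, smul_mul_assoc]
        congr 1
        · ring
        · congr 1; ring
  rw [key m, hGsform n hn]
  ring
end

section
/- Let A be a commutative ℚ-algebra and D : A → A a derivation. Let f, G, p, γ ∈ A with D(f) = 0, D(G) = f·G, D(p) = 0, D(γ) = 0, and suppose γ is invertible in A. Let Ω ∈ ℚ and let s, r be positive integers. Define the sequence G_1 = G, G_{j+1} = D(G)·G_j + (1/j)·G·D(G_j), the map U : A → A by U(h) = p·h + (2s/r²)·γ·D(h), and the map V : A → A by V(h) = U(U(h)) + 2Ω·γ^{−2}·h. Then the s-th iterate of V applied to G_r factorizes as V^s(G_r) = (2f)^{r−1}·G^r·((p + (2s/r)·γ·f)² + 2Ω·γ^{−2})^s. -/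
/-- In a commutative ℚ-algebra with a derivation `D`, given a ladder
element `G` (`D G = f·G`, `D f = 0`), elements `p, γ` with `D p = D γ = 0`, `γ`
invertible, `Ω ∈ ℚ` and positive integers `s, r`, the `s`-th iterate of the operator
`V(h) = U(U(h)) + 2Ω·γ⁻²·h`, where `U(h) = p·h + (2s/r²)·γ·D(h)`, applied to the
recursively defined `G_r` factorizes as
`V^s(G_r) = (2f)^{r-1} · G^r · ((p + (2s/r)·γ·f)² + 2Ω·γ⁻²)^s`. -/
theorem characteristic_integral_factorization_Omega
    (A : Type*) [CommRing A] [Algebra ℚ A]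
    (D : A → A)
    (hadd : ∀ a b : A, D (a + b) = D a + D b)
    (hleibniz : ∀ a b : A, D (a * b) = a * D b + D a * b)
    (f G p γ γinv : A) (hf : D f = 0) (hG : D G = f * G) (hp : D p = 0) (hγ : D γ = 0)
    (hγinv : γ * γinv = 1)
    (Ω : ℚ) (s r : ℕ) (hs : 1 ≤ s) (hr : 1 ≤ r)
    (Gs : ℕ → A) (hGs1 : Gs 1 = G)
    (hGsrec : ∀ j : ℕ, 1 ≤ j →
      Gs (j + 1) = D G * Gs j + ((j : ℚ)⁻¹ • (G * D (Gs j))))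
    (U : A → A)
    (hU : ∀ h : A, U h = p * h + ((2 * s : ℚ) / (r : ℚ) ^ 2) • (γ * D h))
    (V : A → A)
    (hV : ∀ h : A, V h = U (U h) + (2 * Ω) • (γinv ^ 2 * h)) :
    V^[s] (Gs r) =
      (2 * f) ^ (r - 1) * G ^ r *
        ((p + ((2 * s : ℚ) / (r : ℚ)) • (γ * f)) ^ 2 + (2 * Ω) • γinv ^ 2) ^ s := by
  have hr0 : (r : ℚ) ≠ 0 := Nat.cast_ne_zero.mpr (by omega)
  -- D commutes with ℚ-scalars (additive maps between ℚ-modules are ℚ-linear)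
  have hsmul : ∀ (q : ℚ) (a : A), D (q • a) = q • D a := fun q a =>
    map_rat_smul (AddMonoidHom.mk' D hadd) q a
  have hD1 : D 1 = 0 := by
    have h := hleibniz 1 1
    simp only [mul_one, one_mul] at h
    exact (left_eq_add.mp h)
  have hD2 : D (2 : A) = 0 := by
    rw [show (2 : A) = 1 + 1 by norm_num, hadd, hD1, add_zero]
  have hDγinv : D γinv = 0 := by
    have h1 : γ * D γinv + D γ * γinv = 0 := by rw [← hleibniz, hγinv, hD1]
    have h2 : γ * D γinv = 0 := by simpa [hγ] using h1
    calc D γinv = γinv * (γ * D γinv) := by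
          rw [← mul_assoc, mul_comm γinv γ, hγinv, one_mul]
      _ = 0 := by rw [h2, mul_zero]
  have hDmul : ∀ a b : A, D a = 0 → D b = 0 → D (a * b) = 0 := by
    intro a b ha hb; rw [hleibniz, ha, hb]; ring
  have hDaddc : ∀ a b : A, D a = 0 → D b = 0 → D (a + b) = 0 := by
    intro a b ha hb; rw [hadd, ha, hb, add_zero]
  have hDsmulc : ∀ (q : ℚ) (a : A), D a = 0 → D (q • a) = 0 := by
    intro q a ha; rw [hsmul, ha, smul_zero]
  have hDpowc : ∀ (c : A), D c = 0 → ∀ n : ℕ, D (c ^ n) = 0 := by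
    intro c hc n
    induction n with
    | zero => simpa using hD1
    | succ n ih => rw [pow_succ]; exact hDmul _ _ ih hc
  -- derivative of powers of G
  have hDGpow : ∀ n : ℕ, D (G ^ n) = (n : ℚ) • (f * G ^ n) := by
    intro n
    induction n with
    | zero => simpa using hD1
    | succ n ih =>
      rw [pow_succ, hleibniz, ih, hG]
      push_cast
      simp only [Algebra.smul_def, map_add, map_one]
      ring
  -- derivative of (2f)^a * G^b
  have hDW' : ∀ a b : ℕ,
      D ((2 * f) ^ a * G ^ b) = (b : ℚ) • (f * ((2 * f) ^ a * G ^ b)) := by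
    intro a b
    have h2f : D ((2 * f) ^ a) = 0 := hDpowc _ (hDmul _ _ hD2 hf) a
    rw [hleibniz, hDGpow, h2f]
    simp only [Algebra.smul_def]
    ring
  -- closed form for Gs
  have hGsW : ∀ j : ℕ, 1 ≤ j → Gs j = (2 * f) ^ (j - 1) * G ^ j := by
    intro j hj
    induction j, hj using Nat.le_induction with
    | base => simpa using hGs1
    | succ j hj ih =>
      obtain ⟨k, rfl⟩ : ∃ k, j = k + 1 := ⟨j - 1, by omega⟩
      have hk : k + 1 - 1 = k := rfl
      rw [hGsrec _ hj, ih, hk, hDW', hG]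
      have hj0 : ((k + 1 : ℕ) : ℚ) ≠ 0 := Nat.cast_ne_zero.mpr (by omega)
      rw [mul_smul_comm, smul_smul, inv_mul_cancel₀ hj0, one_smul]
      have : (k + 1 + 1 - 1 : ℕ) = k + 1 := rfl
      rw [this]
      ring
  set W : A := (2 * f) ^ (r - 1) * G ^ r with hWdef
  have hDW : D W = (r : ℚ) • (f * W) := hDW' _ _
  set q : ℚ := (2 * s : ℚ) / (r : ℚ) with hqdef
  set P : A := p + q • (γ * f) with hPdef
  set M : A := P ^ 2 + (2 * Ω) • γinv ^ 2 with hMdef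
  have e1 : (algebraMap ℚ A) ((2 * s : ℚ) / (r : ℚ) ^ 2) * (algebraMap ℚ A) (r : ℚ)
      = (algebraMap ℚ A) q := by
    rw [← map_mul]; congr 1; rw [hqdef]; field_simp
  have hUW : ∀ c : A, D c = 0 → U (W * c) = W * (P * c) := by
    intro c hc
    have hd : D (W * c) = (algebraMap ℚ A (r : ℚ)) * (f * W) * c := by
      rw [hleibniz, hc, hDW, Algebra.smul_def]; ring
    rw [hU, hd, hPdef]
    simp only [Algebra.smul_def]
    linear_combination (γ * f * W * c) * e1
  have hDP : D P = 0 :=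
    hDaddc _ _ hp (hDsmulc _ _ (hDmul _ _ hγ hf))
  have hDM : D M = 0 :=
    hDaddc _ _ (hDpowc _ hDP 2) (hDsmulc _ _ (hDpowc _ hDγinv 2))
  have hVW : ∀ c : A, D c = 0 → V (W * c) = W * (M * c) := by
    intro c hc
    have hc1 : D (P * c) = 0 := hDmul _ _ hDP hc
    rw [hV, hUW c hc, hUW _ hc1, hMdef]
    simp only [Algebra.smul_def]
    ring
  have key : ∀ n : ℕ, ∀ c : A, D c = 0 → V^[n] (W * c) = W * (M ^ n * c) := by
    intro n
    induction n with
    | zero => intro c hc; simp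
    | succ n ih =>
      intro c hc
      rw [Function.iterate_succ_apply, hVW c hc, ih _ (hDmul _ _ hDM hc)]
      ring
  calc V^[s] (Gs r) = V^[s] (W * 1) := by rw [hGsW r hr, mul_one]
    _ = W * (M ^ s * 1) := key s 1 hD1
    _ = (2 * f) ^ (r - 1) * G ^ r *
        ((p + ((2 * s : ℚ) / (r : ℚ)) • (γ * f)) ^ 2 + (2 * Ω) • γinv ^ 2) ^ s := by
        rw [mul_one, hMdef, hPdef, hWdef, hqdef, mul_assoc]
end

section
/- Let c, c₀, C ∈ ℝ, let m, n be positive integers, k = m/n. Let L and f be smooth functions on the extended phase space ℝ^{2N+2} depending on (q,p) only, with X_L f = 0 and f² = −2(cL + c₀) identically. Let γ be a smooth solution of γ' + cγ² + C = 0 on an open interval I, and set H₀ = (1/2)p_u² − k²γ'(u)·L + k²c₀·γ(u)². Then: (i) the shift function F = (p_u + k·γ(u)·f)^m satisfies {H₀, F} = n·k²·γ'(u)·f·F at every point with u ∈ I; (ii) if moreover m = 2s is even, γ is nonvanishing on I and Ω ∈ ℝ, then the shift function F = ((p_u + k·γ(u)·f)² + 2Ω·γ(u)^{−2})^s satisfies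 {H, F} = n·k²·γ'(u)·f·F at every point with u ∈ I, where H = H₀ + Ω/γ(u)². -/
/-!
Extended phase space ℝ^{2N+2} with coordinates (u, q, p_u, p),
canonical Poisson bracket (sign convention {q^i, p_i} = -1) and
Hamiltonian vector field X_L F = {L, F}.
-/

noncomputable section

lemma hasDerivAt_pdq {N : ℕ} (f : PS N → ℝ) (hf : Differentiable ℝ f) (x : PS N) (i : Fin N) :
    HasDerivAt (fun t => f (x.1, Function.update x.2.1 i t, x.2.2.1, x.2.2.2)) (pdq i f x) (x.2.1 i) := by
  have hu : Differentiable ℝ (Function.update x.2.1 i) :=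
    fun t => (hasDerivAt_update x.2.1 i t).differentiableAt
  have h : Differentiable ℝ (fun t => f (x.1, Function.update x.2.1 i t, x.2.2.1, x.2.2.2)) :=
    hf.comp (Differentiable.prodMk (differentiable_const _)
      (hu.prodMk (Differentiable.prodMk (differentiable_const _) (differentiable_const _))))
  exact (h _).hasDerivAt

lemma hasDerivAt_pdp {N : ℕ} (f : PS N → ℝ) (hf : Differentiable ℝ f) (x : PS N) (i : Fin N) :
    HasDerivAt (fun t => f (x.1, x.2.1, x.2.2.1, Function.update x.2.2.2 i t)) (pdp i f x) (x.2.2.2 i) := by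
  have hu : Differentiable ℝ (Function.update x.2.2.2 i) :=
    fun t => (hasDerivAt_update x.2.2.2 i t).differentiableAt
  have h : Differentiable ℝ (fun t => f (x.1, x.2.1, x.2.2.1, Function.update x.2.2.2 i t)) :=
    hf.comp (Differentiable.prodMk (differentiable_const _)
      (Differentiable.prodMk (differentiable_const _) (Differentiable.prodMk (differentiable_const _) hu)))
  exact (h _).hasDerivAt

/-- If `f` is a function of `(q,p)` only with `X_L f = 0` and
`f² = -2(cL+c₀)`, then the shift function `F = (p_u + kγf)^m` satisfies
`{H₀, F} = nk²γ'fF`, and for even `m = 2s`, nonvanishing `γ` and any `Ω`, the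
shift function `F = ((p_u + kγf)² + 2Ωγ⁻²)^s` satisfies `{H, F} = nk²γ'fF`
with `H = H₀ + Ω/γ²`. -/
theorem shift_function_relation
    (N : ℕ) (hN : 1 ≤ N) (m n : ℕ) (hm : 0 < m) (hn : 0 < n) (k : ℝ)
    (hk : k = (m : ℝ) / (n : ℝ))
    (c c₀ C : ℝ) (L f : PS N → ℝ)
    (hLsmooth : ContDiff ℝ (⊤ : ℕ∞) L) (hfsmooth : ContDiff ℝ (⊤ : ℕ∞) f)
    (hLqp : ∀ (u u' pu pu' : ℝ) (q p : Fin N → ℝ),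
      L (u, q, pu, p) = L (u', q, pu', p))
    (hfqp : ∀ (u u' pu pu' : ℝ) (q p : Fin N → ℝ),
      f (u, q, pu, p) = f (u', q, pu', p))
    (hXLf : ∀ x : PS N, XL L f x = 0)
    (hfsq : ∀ x : PS N, f x ^ 2 = -2 * (c * L x + c₀))
    (I : Set ℝ) (hIopen : IsOpen I) (hIconn : I.OrdConnected) (hInonempty : I.Nonempty)
    (γ : ℝ → ℝ) (hγ : ContDiff ℝ (⊤ : ℕ∞) γ)
    (hode : ∀ u ∈ I, deriv γ u + c * γ u ^ 2 + C = 0)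
    (H₀ : PS N → ℝ)
    (hH₀ : ∀ x : PS N, H₀ x = (1 / 2) * x.2.2.1 ^ 2
      - k ^ 2 * deriv γ x.1 * L x + k ^ 2 * c₀ * γ x.1 ^ 2) :
    (∀ x : PS N, x.1 ∈ I →
      pbracket H₀ (fun y => (y.2.2.1 + k * γ y.1 * f y) ^ m) x
        = (n : ℝ) * k ^ 2 * deriv γ x.1 * f x * (x.2.2.1 + k * γ x.1 * f x) ^ m) ∧
    (∀ (s : ℕ) (Ω : ℝ), m = 2 * s → (∀ u ∈ I, γ u ≠ 0) →
      ∀ x : PS N, x.1 ∈ I →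
        pbracket (fun y => H₀ y + Ω / γ y.1 ^ 2)
            (fun y => ((y.2.2.1 + k * γ y.1 * f y) ^ 2 + 2 * Ω / γ y.1 ^ 2) ^ s) x
          = (n : ℝ) * k ^ 2 * deriv γ x.1 * f x *
              ((x.2.2.1 + k * γ x.1 * f x) ^ 2 + 2 * Ω / γ x.1 ^ 2) ^ s) := by
  have hLd : Differentiable ℝ L := hLsmooth.differentiable (by simp)
  have hfd : Differentiable ℝ f := hfsmooth.differentiable (by simp)
  have hγd : Differentiable ℝ γ := hγ.differentiable (by simp)
  have hkk : (n : ℝ) * k ^ 2 = (m : ℝ) * k := by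
    subst hk
    have hn' : (n : ℝ) ≠ 0 := Nat.cast_ne_zero.mpr hn.ne'
    field_simp
  -- constancy facts
  have hfu : ∀ x : PS N, pdu f x = 0 := by
    intro x
    show deriv (fun t => f (t, x.2.1, x.2.2.1, x.2.2.2)) x.1 = 0
    have : (fun t => f (t, x.2.1, x.2.2.1, x.2.2.2)) = fun _ => f x :=
      funext fun t => hfqp t x.1 x.2.2.1 x.2.2.1 x.2.1 x.2.2.2
    rw [this, deriv_const]
  have hfpu : ∀ x : PS N, pdpu f x = 0 := by
    intro x
    show deriv (fun t => f (x.1, x.2.1, t, x.2.2.2)) x.2.2.1 = 0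
    have : (fun t => f (x.1, x.2.1, t, x.2.2.2)) = fun _ => f x :=
      funext fun t => hfqp x.1 x.1 t x.2.2.1 x.2.1 x.2.2.2
    rw [this, deriv_const]
  -- the q-p part of {L,f} vanishes
  have hsum0 : ∀ x : PS N,
      ∑ i : Fin N, (pdp i L x * pdq i f x - pdq i L x * pdp i f x) = 0 := by
    intro x
    have h := hXLf x
    unfold XL pbracket at h
    rw [hfu x, hfpu x] at h
    simpa using h
  constructor
  · -- part (i)
    rintro ⟨u, q, pu, p⟩ hxI
    have hLcu : ∀ t : ℝ, L (t, q, pu, p) = L (u, q, pu, p) := fun t => hLqp t u pu pu q p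
    have hfcu : ∀ t : ℝ, f (t, q, pu, p) = f (u, q, pu, p) := fun t => hfqp t u pu pu q p
    have hγ2 : HasDerivAt (fun t => γ t ^ 2) (2 * γ u * deriv γ u) u := by
      have := (hγd u).hasDerivAt.fun_pow 2
      simpa [mul_comm] using this
    -- derivatives of F
    have h_pduF : pdu (fun y => (y.2.2.1 + k * γ y.1 * f y) ^ m) (u, q, pu, p)
        = (m : ℝ) * (pu + k * γ u * f (u, q, pu, p)) ^ (m - 1)
            * (k * deriv γ u * f (u, q, pu, p)) := by
      show deriv (fun t => (pu + k * γ t * f (t, q, pu, p)) ^ m) u = _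
      have e : (fun t => (pu + k * γ t * f (t, q, pu, p)) ^ m)
          = fun t => (pu + k * γ t * f (u, q, pu, p)) ^ m := funext fun t => by rw [hfcu t]
      rw [e]
      exact (((((hγd u).hasDerivAt.const_mul k).mul_const (f (u, q, pu, p))).const_add pu).pow m).deriv
    have h_pdpuF : pdpu (fun y => (y.2.2.1 + k * γ y.1 * f y) ^ m) (u, q, pu, p)
        = (m : ℝ) * (pu + k * γ u * f (u, q, pu, p)) ^ (m - 1) := by
      show deriv (fun t => (t + k * γ u * f (u, q, t, p)) ^ m) pu = _
      have e : (fun t => (t + k * γ u * f (u, q, t, p)) ^ m)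
          = fun t => (t + k * γ u * f (u, q, pu, p)) ^ m :=
        funext fun t => by rw [hfqp u u t pu q p]
      rw [e]
      simpa using (((hasDerivAt_id pu).add_const (k * γ u * f (u, q, pu, p))).pow m).deriv
    have h_pdqF : ∀ i : Fin N, pdq i (fun y => (y.2.2.1 + k * γ y.1 * f y) ^ m) (u, q, pu, p)
        = (m : ℝ) * (pu + k * γ u * f (u, q, pu, p)) ^ (m - 1)
            * (k * γ u * pdq i f (u, q, pu, p)) := by
      intro i
      show deriv (fun t => (pu + k * γ u * f (u, Function.update q i t, pu, p)) ^ m) (q i) = _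
      erw [((((hasDerivAt_pdq f hfd (u, q, pu, p) i).const_mul (k * γ u)).const_add pu).pow m).deriv]
      simp
    have h_pdpF : ∀ i : Fin N, pdp i (fun y => (y.2.2.1 + k * γ y.1 * f y) ^ m) (u, q, pu, p)
        = (m : ℝ) * (pu + k * γ u * f (u, q, pu, p)) ^ (m - 1)
            * (k * γ u * pdp i f (u, q, pu, p)) := by
      intro i
      show deriv (fun t => (pu + k * γ u * f (u, q, pu, Function.update p i t)) ^ m) (p i) = _
      erw [((((hasDerivAt_pdp f hfd (u, q, pu, p) i).const_mul (k * γ u)).const_add pu).pow m).deriv]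
      simp
    -- derivatives of H₀
    have h_pduH : pdu H₀ (u, q, pu, p)
        = 2 * k ^ 2 * c * γ u * deriv γ u * L (u, q, pu, p)
            + 2 * k ^ 2 * c₀ * γ u * deriv γ u := by
      show deriv (fun t => H₀ (t, q, pu, p)) u = _
      have e : (fun t => H₀ (t, q, pu, p))
          = fun t => 1 / 2 * pu ^ 2 - k ^ 2 * deriv γ t * L (u, q, pu, p)
              + k ^ 2 * c₀ * γ t ^ 2 := by
        funext t
        rw [hH₀ (t, q, pu, p), hLcu t]
      rw [e]
      have hev : (fun t => 1 / 2 * pu ^ 2 - k ^ 2 * deriv γ t * L (u, q, pu, p)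
              + k ^ 2 * c₀ * γ t ^ 2)
          =ᶠ[nhds u] fun t => 1 / 2 * pu ^ 2 - k ^ 2 * (-(c * γ t ^ 2) - C) * L (u, q, pu, p)
              + k ^ 2 * c₀ * γ t ^ 2 := by
        filter_upwards [hIopen.mem_nhds hxI] with t ht
        have h1 := hode t ht
        have h2 : deriv γ t = -(c * γ t ^ 2) - C := by linarith
        rw [h2]
      rw [hev.deriv_eq]
      erw [(((hasDerivAt_const u (1 / 2 * pu ^ 2)).sub
        ((((hγ2.const_mul c).neg.sub_const C).const_mul (k ^ 2)).mul_const (L (u, q, pu, p)))).add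
        (hγ2.const_mul (k ^ 2 * c₀))).deriv]
      ring
    have h_pdpuH : pdpu H₀ (u, q, pu, p) = pu := by
      show deriv (fun t => H₀ (u, q, t, p)) pu = _
      have e : (fun t => H₀ (u, q, t, p))
          = fun t => 1 / 2 * t ^ 2 - k ^ 2 * deriv γ u * L (u, q, pu, p)
              + k ^ 2 * c₀ * γ u ^ 2 := by
        funext t
        rw [hH₀ (u, q, t, p), hLqp u u t pu q p]
      rw [e]
      rw [((((hasDerivAt_pow 2 pu).const_mul ((1:ℝ) / 2)).sub_const
        (k ^ 2 * deriv γ u * L (u, q, pu, p))).add_const (k ^ 2 * c₀ * γ u ^ 2)).deriv]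
      ring
    have h_pdqH : ∀ i : Fin N, pdq i H₀ (u, q, pu, p)
        = -(k ^ 2 * deriv γ u) * pdq i L (u, q, pu, p) := by
      intro i
      show deriv (fun t => H₀ (u, Function.update q i t, pu, p)) (q i) = _
      have e : (fun t => H₀ (u, Function.update q i t, pu, p))
          = fun t => 1 / 2 * pu ^ 2 - k ^ 2 * deriv γ u * L (u, Function.update q i t, pu, p)
              + k ^ 2 * c₀ * γ u ^ 2 := by
        funext t; rw [hH₀ (u, Function.update q i t, pu, p)]
      rw [e]
      erw [(((hasDerivAt_const (q i) (1 / 2 * pu ^ 2)).sub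
        ((hasDerivAt_pdq L hLd (u, q, pu, p) i).const_mul (k ^ 2 * deriv γ u))).add_const
        (k ^ 2 * c₀ * γ u ^ 2)).deriv]
      ring
    have h_pdpH : ∀ i : Fin N, pdp i H₀ (u, q, pu, p)
        = -(k ^ 2 * deriv γ u) * pdp i L (u, q, pu, p) := by
      intro i
      show deriv (fun t => H₀ (u, q, pu, Function.update p i t)) (p i) = _
      have e : (fun t => H₀ (u, q, pu, Function.update p i t))
          = fun t => 1 / 2 * pu ^ 2 - k ^ 2 * deriv γ u * L (u, q, pu, Function.update p i t)
              + k ^ 2 * c₀ * γ u ^ 2 := by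
        funext t; rw [hH₀ (u, q, pu, Function.update p i t)]
      rw [e]
      erw [(((hasDerivAt_const (p i) (1 / 2 * pu ^ 2)).sub
        ((hasDerivAt_pdp L hLd (u, q, pu, p) i).const_mul (k ^ 2 * deriv γ u))).add_const
        (k ^ 2 * c₀ * γ u ^ 2)).deriv]
      ring
    -- assemble
    unfold pbracket
    have hsum : ∑ i : Fin N,
        (pdp i H₀ (u, q, pu, p) * pdq i (fun y => (y.2.2.1 + k * γ y.1 * f y) ^ m) (u, q, pu, p)
          - pdq i H₀ (u, q, pu, p) * pdp i (fun y => (y.2.2.1 + k * γ y.1 * f y) ^ m) (u, q, pu, p)) = 0 := by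
      have e : ∀ i ∈ Finset.univ, (pdp i H₀ (u, q, pu, p) * pdq i (fun y => (y.2.2.1 + k * γ y.1 * f y) ^ m) (u, q, pu, p)
          - pdq i H₀ (u, q, pu, p) * pdp i (fun y => (y.2.2.1 + k * γ y.1 * f y) ^ m) (u, q, pu, p))
          = (-(k ^ 2 * deriv γ u) * ((m : ℝ) * (pu + k * γ u * f (u, q, pu, p)) ^ (m - 1) * (k * γ u)))
            * (pdp i L (u, q, pu, p) * pdq i f (u, q, pu, p)
               - pdq i L (u, q, pu, p) * pdp i f (u, q, pu, p)) := by
        intro i _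
        rw [h_pdpH i, h_pdqH i, h_pdqF i, h_pdpF i]; ring
      rw [Finset.sum_congr rfl e, ← Finset.mul_sum, hsum0 (u, q, pu, p), mul_zero]
    rw [hsum, h_pdpuH, h_pduF, h_pduH, h_pdpuF, add_zero]
    have hm1 : (pu + k * γ u * f (u, q, pu, p)) ^ (m - 1) * (pu + k * γ u * f (u, q, pu, p))
        = (pu + k * γ u * f (u, q, pu, p)) ^ m := by
      rw [← pow_succ]; congr 1; omega
    have hsq := hfsq (u, q, pu, p)
    show pu * ((m : ℝ) * (pu + k * γ u * f (u, q, pu, p)) ^ (m - 1) * (k * deriv γ u * f (u, q, pu, p)))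
        - (2 * k ^ 2 * c * γ u * deriv γ u * L (u, q, pu, p) + 2 * k ^ 2 * c₀ * γ u * deriv γ u)
          * ((m : ℝ) * (pu + k * γ u * f (u, q, pu, p)) ^ (m - 1))
        = (n : ℝ) * k ^ 2 * deriv γ u * f (u, q, pu, p) * (pu + k * γ u * f (u, q, pu, p)) ^ m
    rw [← hm1]
    linear_combination (-(m : ℝ) * k ^ 2 * γ u * deriv γ u * (pu + k * γ u * f (u, q, pu, p)) ^ (m - 1)) * hsq
      - (deriv γ u * f (u, q, pu, p) * (pu + k * γ u * f (u, q, pu, p)) ^ (m - 1)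
          * (pu + k * γ u * f (u, q, pu, p))) * hkk
  · -- part (ii)
    rintro s Ω hms hγne ⟨u, q, pu, p⟩ hxI
    have hs1 : 1 ≤ s := by omega
    have hgne : γ u ≠ 0 := hγne u hxI
    have hg2ne : γ u ^ 2 ≠ 0 := pow_ne_zero 2 hgne
    have hLcu : ∀ t : ℝ, L (t, q, pu, p) = L (u, q, pu, p) := fun t => hLqp t u pu pu q p
    have hfcu : ∀ t : ℝ, f (t, q, pu, p) = f (u, q, pu, p) := fun t => hfqp t u pu pu q p
    have hγ2 : HasDerivAt (fun t => γ t ^ 2) (2 * γ u * deriv γ u) u := by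
      have := (hγd u).hasDerivAt.fun_pow 2
      simpa [mul_comm] using this
    -- derivatives of F
    have h_pduF : pdu (fun y => ((y.2.2.1 + k * γ y.1 * f y) ^ 2 + 2 * Ω / γ y.1 ^ 2) ^ s) (u, q, pu, p)
        = (s : ℝ) * ((pu + k * γ u * f (u, q, pu, p)) ^ 2 + 2 * Ω / γ u ^ 2) ^ (s - 1)
            * (2 * (pu + k * γ u * f (u, q, pu, p)) * (k * deriv γ u * f (u, q, pu, p))
               - 4 * Ω * (γ u * deriv γ u) / (γ u ^ 2) ^ 2) := by
      show deriv (fun t => ((pu + k * γ t * f (t, q, pu, p)) ^ 2 + 2 * Ω / γ t ^ 2) ^ s) u = _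
      have e : (fun t => ((pu + k * γ t * f (t, q, pu, p)) ^ 2 + 2 * Ω / γ t ^ 2) ^ s)
          = fun t => ((pu + k * γ t * f (u, q, pu, p)) ^ 2 + 2 * Ω / γ t ^ 2) ^ s :=
        funext fun t => by rw [hfcu t]
      rw [e]
      rw [((((((hγd u).hasDerivAt.const_mul k).mul_const (f (u, q, pu, p))).const_add pu).fun_pow 2).fun_add
        ((hasDerivAt_const u (2 * Ω)).fun_div hγ2 hg2ne)).fun_pow s |>.deriv]
      ring
    have h_pdpuF : pdpu (fun y => ((y.2.2.1 + k * γ y.1 * f y) ^ 2 + 2 * Ω / γ y.1 ^ 2) ^ s) (u, q, pu, p)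
        = (s : ℝ) * ((pu + k * γ u * f (u, q, pu, p)) ^ 2 + 2 * Ω / γ u ^ 2) ^ (s - 1)
            * (2 * (pu + k * γ u * f (u, q, pu, p))) := by
      show deriv (fun t => ((t + k * γ u * f (u, q, t, p)) ^ 2 + 2 * Ω / γ u ^ 2) ^ s) pu = _
      have e : (fun t => ((t + k * γ u * f (u, q, t, p)) ^ 2 + 2 * Ω / γ u ^ 2) ^ s)
          = fun t => ((t + k * γ u * f (u, q, pu, p)) ^ 2 + 2 * Ω / γ u ^ 2) ^ s :=
        funext fun t => by rw [hfqp u u t pu q p]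
      rw [e]
      have hD := ((((hasDerivAt_id pu).add_const (k * γ u * f (u, q, pu, p))).fun_pow 2).add_const
        (2 * Ω / γ u ^ 2)).fun_pow s
      have hd2 := hD.deriv
      simp only [id_eq] at hd2
      rw [hd2]
      ring
    have h_pdqF : ∀ i : Fin N, pdq i (fun y => ((y.2.2.1 + k * γ y.1 * f y) ^ 2 + 2 * Ω / γ y.1 ^ 2) ^ s) (u, q, pu, p)
        = (s : ℝ) * ((pu + k * γ u * f (u, q, pu, p)) ^ 2 + 2 * Ω / γ u ^ 2) ^ (s - 1)
            * (2 * (pu + k * γ u * f (u, q, pu, p)) * (k * γ u * pdq i f (u, q, pu, p))) := by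
      intro i
      show deriv (fun t => ((pu + k * γ u * f (u, Function.update q i t, pu, p)) ^ 2 + 2 * Ω / γ u ^ 2) ^ s) (q i) = _
      erw [(((((hasDerivAt_pdq f hfd (u, q, pu, p) i).const_mul (k * γ u)).const_add pu).pow 2).add_const
        (2 * Ω / γ u ^ 2)).pow s |>.deriv]
      simp
    have h_pdpF : ∀ i : Fin N, pdp i (fun y => ((y.2.2.1 + k * γ y.1 * f y) ^ 2 + 2 * Ω / γ y.1 ^ 2) ^ s) (u, q, pu, p)
        = (s : ℝ) * ((pu + k * γ u * f (u, q, pu, p)) ^ 2 + 2 * Ω / γ u ^ 2) ^ (s - 1)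
            * (2 * (pu + k * γ u * f (u, q, pu, p)) * (k * γ u * pdp i f (u, q, pu, p))) := by
      intro i
      show deriv (fun t => ((pu + k * γ u * f (u, q, pu, Function.update p i t)) ^ 2 + 2 * Ω / γ u ^ 2) ^ s) (p i) = _
      erw [(((((hasDerivAt_pdp f hfd (u, q, pu, p) i).const_mul (k * γ u)).const_add pu).pow 2).add_const
        (2 * Ω / γ u ^ 2)).pow s |>.deriv]
      simp
    -- derivatives of H
    have h_pduH : pdu (fun y => H₀ y + Ω / γ y.1 ^ 2) (u, q, pu, p)
        = 2 * k ^ 2 * c * γ u * deriv γ u * L (u, q, pu, p)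
            + 2 * k ^ 2 * c₀ * γ u * deriv γ u
            - Ω * (2 * (γ u * deriv γ u)) / (γ u ^ 2) ^ 2 := by
      show deriv (fun t => H₀ (t, q, pu, p) + Ω / γ t ^ 2) u = _
      have e : (fun t => H₀ (t, q, pu, p) + Ω / γ t ^ 2)
          = fun t => 1 / 2 * pu ^ 2 - k ^ 2 * deriv γ t * L (u, q, pu, p)
              + k ^ 2 * c₀ * γ t ^ 2 + Ω / γ t ^ 2 := by
        funext t
        rw [hH₀ (t, q, pu, p), hLcu t]
      rw [e]
      have hev : (fun t => 1 / 2 * pu ^ 2 - k ^ 2 * deriv γ t * L (u, q, pu, p)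
              + k ^ 2 * c₀ * γ t ^ 2 + Ω / γ t ^ 2)
          =ᶠ[nhds u] fun t => 1 / 2 * pu ^ 2 - k ^ 2 * (-(c * γ t ^ 2) - C) * L (u, q, pu, p)
              + k ^ 2 * c₀ * γ t ^ 2 + Ω / γ t ^ 2 := by
        filter_upwards [hIopen.mem_nhds hxI] with t ht
        have h1 := hode t ht
        have h2 : deriv γ t = -(c * γ t ^ 2) - C := by linarith
        rw [h2]
      rw [hev.deriv_eq]
      erw [((((hasDerivAt_const u (1 / 2 * pu ^ 2)).sub
        ((((hγ2.const_mul c).neg.sub_const C).const_mul (k ^ 2)).mul_const (L (u, q, pu, p)))).add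
        (hγ2.const_mul (k ^ 2 * c₀))).add ((hasDerivAt_const u Ω).div hγ2 hg2ne)).deriv]
      ring
    have h_pdpuH : pdpu (fun y => H₀ y + Ω / γ y.1 ^ 2) (u, q, pu, p) = pu := by
      show deriv (fun t => H₀ (u, q, t, p) + Ω / γ u ^ 2) pu = _
      have e : (fun t => H₀ (u, q, t, p) + Ω / γ u ^ 2)
          = fun t => 1 / 2 * t ^ 2 - k ^ 2 * deriv γ u * L (u, q, pu, p)
              + k ^ 2 * c₀ * γ u ^ 2 + Ω / γ u ^ 2 := by
        funext t
        rw [hH₀ (u, q, t, p), hLqp u u t pu q p]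
      rw [e]
      rw [(((((hasDerivAt_pow 2 pu).const_mul ((1:ℝ) / 2)).sub_const
        (k ^ 2 * deriv γ u * L (u, q, pu, p))).add_const (k ^ 2 * c₀ * γ u ^ 2)).add_const
        (Ω / γ u ^ 2)).deriv]
      ring
    have h_pdqH : ∀ i : Fin N, pdq i (fun y => H₀ y + Ω / γ y.1 ^ 2) (u, q, pu, p)
        = -(k ^ 2 * deriv γ u) * pdq i L (u, q, pu, p) := by
      intro i
      show deriv (fun t => H₀ (u, Function.update q i t, pu, p) + Ω / γ u ^ 2) (q i) = _
      have e : (fun t => H₀ (u, Function.update q i t, pu, p) + Ω / γ u ^ 2)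
          = fun t => 1 / 2 * pu ^ 2 - k ^ 2 * deriv γ u * L (u, Function.update q i t, pu, p)
              + k ^ 2 * c₀ * γ u ^ 2 + Ω / γ u ^ 2 := by
        funext t; rw [hH₀ (u, Function.update q i t, pu, p)]
      rw [e]
      erw [((((hasDerivAt_const (q i) (1 / 2 * pu ^ 2)).sub
        ((hasDerivAt_pdq L hLd (u, q, pu, p) i).const_mul (k ^ 2 * deriv γ u))).add_const
        (k ^ 2 * c₀ * γ u ^ 2)).add_const (Ω / γ u ^ 2)).deriv]
      ring
    have h_pdpH : ∀ i : Fin N, pdp i (fun y => H₀ y + Ω / γ y.1 ^ 2) (u, q, pu, p)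
        = -(k ^ 2 * deriv γ u) * pdp i L (u, q, pu, p) := by
      intro i
      show deriv (fun t => H₀ (u, q, pu, Function.update p i t) + Ω / γ u ^ 2) (p i) = _
      have e : (fun t => H₀ (u, q, pu, Function.update p i t) + Ω / γ u ^ 2)
          = fun t => 1 / 2 * pu ^ 2 - k ^ 2 * deriv γ u * L (u, q, pu, Function.update p i t)
              + k ^ 2 * c₀ * γ u ^ 2 + Ω / γ u ^ 2 := by
        funext t; rw [hH₀ (u, q, pu, Function.update p i t)]
      rw [e]
      erw [((((hasDerivAt_const (p i) (1 / 2 * pu ^ 2)).sub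
        ((hasDerivAt_pdp L hLd (u, q, pu, p) i).const_mul (k ^ 2 * deriv γ u))).add_const
        (k ^ 2 * c₀ * γ u ^ 2)).add_const (Ω / γ u ^ 2)).deriv]
      ring
    -- assemble
    unfold pbracket
    have hsum : ∑ i : Fin N,
        (pdp i (fun y => H₀ y + Ω / γ y.1 ^ 2) (u, q, pu, p)
              * pdq i (fun y => ((y.2.2.1 + k * γ y.1 * f y) ^ 2 + 2 * Ω / γ y.1 ^ 2) ^ s) (u, q, pu, p)
          - pdq i (fun y => H₀ y + Ω / γ y.1 ^ 2) (u, q, pu, p)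
              * pdp i (fun y => ((y.2.2.1 + k * γ y.1 * f y) ^ 2 + 2 * Ω / γ y.1 ^ 2) ^ s) (u, q, pu, p)) = 0 := by
      have e : ∀ i ∈ Finset.univ,
          (pdp i (fun y => H₀ y + Ω / γ y.1 ^ 2) (u, q, pu, p)
              * pdq i (fun y => ((y.2.2.1 + k * γ y.1 * f y) ^ 2 + 2 * Ω / γ y.1 ^ 2) ^ s) (u, q, pu, p)
          - pdq i (fun y => H₀ y + Ω / γ y.1 ^ 2) (u, q, pu, p)
              * pdp i (fun y => ((y.2.2.1 + k * γ y.1 * f y) ^ 2 + 2 * Ω / γ y.1 ^ 2) ^ s) (u, q, pu, p))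
          = (-(k ^ 2 * deriv γ u) * ((s : ℝ) * ((pu + k * γ u * f (u, q, pu, p)) ^ 2 + 2 * Ω / γ u ^ 2) ^ (s - 1)
              * (2 * (pu + k * γ u * f (u, q, pu, p)) * (k * γ u))))
            * (pdp i L (u, q, pu, p) * pdq i f (u, q, pu, p)
               - pdq i L (u, q, pu, p) * pdp i f (u, q, pu, p)) := by
        intro i _
        rw [h_pdpH i, h_pdqH i, h_pdqF i, h_pdpF i]; ring
      rw [Finset.sum_congr rfl e, ← Finset.mul_sum, hsum0 (u, q, pu, p), mul_zero]
    rw [hsum, h_pdpuH, h_pduF, h_pduH, h_pdpuF, add_zero]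
    have hsq := hfsq (u, q, pu, p)
    have hrw : 2 * k ^ 2 * c * γ u * deriv γ u * L (u, q, pu, p)
        + 2 * k ^ 2 * c₀ * γ u * deriv γ u
        = -(k ^ 2 * γ u * deriv γ u * f (u, q, pu, p) ^ 2) := by
      linear_combination (k ^ 2 * γ u * deriv γ u) * hsq
    show pu * ((s : ℝ) * ((pu + k * γ u * f (u, q, pu, p)) ^ 2 + 2 * Ω / γ u ^ 2) ^ (s - 1)
            * (2 * (pu + k * γ u * f (u, q, pu, p)) * (k * deriv γ u * f (u, q, pu, p))
               - 4 * Ω * (γ u * deriv γ u) / (γ u ^ 2) ^ 2))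
        - (2 * k ^ 2 * c * γ u * deriv γ u * L (u, q, pu, p)
            + 2 * k ^ 2 * c₀ * γ u * deriv γ u
            - Ω * (2 * (γ u * deriv γ u)) / (γ u ^ 2) ^ 2)
          * ((s : ℝ) * ((pu + k * γ u * f (u, q, pu, p)) ^ 2 + 2 * Ω / γ u ^ 2) ^ (s - 1)
            * (2 * (pu + k * γ u * f (u, q, pu, p))))
        = (n : ℝ) * k ^ 2 * deriv γ u * f (u, q, pu, p)
            * ((pu + k * γ u * f (u, q, pu, p)) ^ 2 + 2 * Ω / γ u ^ 2) ^ s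
    rw [hrw]
    have hbs : ((pu + k * γ u * f (u, q, pu, p)) ^ 2 + 2 * Ω / γ u ^ 2) ^ s
        = ((pu + k * γ u * f (u, q, pu, p)) ^ 2 + 2 * Ω / γ u ^ 2) ^ (s - 1)
          * ((pu + k * γ u * f (u, q, pu, p)) ^ 2 + 2 * Ω / γ u ^ 2) := by
      rw [← pow_succ]; congr 1; omega
    rw [hbs, hkk]
    have hm2 : (m : ℝ) = 2 * (s : ℝ) := by rw [hms]; push_cast; ring
    rw [hm2]
    generalize ((pu + k * γ u * f (u, q, pu, p)) ^ 2 + 2 * Ω / γ u ^ 2) ^ (s - 1) = E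
    field_simp
    ring
end
end
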